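/- arXiv:0904.4216 — 4 statements merged into one kernel-verified Lean document; each statement's English description precedes it below -/
import Mathlib

section
/- Let A be a Noetherian commutative ring, 𝒫 a prime ideal of A, and 0 → K → M → N → 0 a short exact sequence of finitely generated A-modules such that K ⊗_A A_𝒫 has finite length as an A_𝒫-module. Then the induced sequence 0 → K ⊗ A_𝒫 → Λ(M ⊗ A_𝒫) → Λ(N ⊗ A_𝒫) → 0 is exact, and consequently ℓ_{A_𝒫}(Λ(M ⊗ A_𝒫)) = ℓ_{A_𝒫}(Λ(N ⊗ A_𝒫)) + ℓ_{A_𝒫}(K ⊗ A_𝒫). -/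
/-!
Over a Noetherian base, `Λ(M_𝒫)` is finitely generated by elements of finite length, so it has
finite length. Restricting the localized exact sequence gives `0 → K_𝒫 → Λ(M_𝒫) → Λ(N_𝒫) → 0`:
`K_𝒫` lands in `Λ(M_𝒫)` because it has finite length, and an element of `M_𝒫` whose image lies in
`Λ(N_𝒫)` generates an extension of a finite-length module by a submodule of `K_𝒫`. Additivity then
follows from that of `Module.length`: on a finite-length module, the rank of `⊥` for `>` (which is
`olength`) equals its coheight, which is `Module.length`.
-/

open scoped Classical

universe u v

/-- The ordinal-valued (Krull) length of a module: the rank of `⊥` in the well-founded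
relation `>` on submodules (so `olength M = sup {olength N + 1 | N proper quotient of M}`);
defined to be `0` when the relation is not accessible at `⊥`. -/
noncomputable def olength (A : Type u) [CommRing A] (M : Type*) [AddCommGroup M]
    [Module A M] : Ordinal :=
  if h : Acc (α := Submodule A M) (· > ·) ⊥ then h.rank else 0

namespace Order

variable {α : Type*} [Preorder α]

lemma exists_coheight_eq_lt_of_lt {a b : α} {n : ℕ} (ha : coheight a = n) (hab : a < b) :
    ∃ m < n, coheight b = m := by
  have hlt : coheight b < n :=
    ha ▸ coheight_strictAnti hab ((coheight_anti hab.le).trans_lt (ha ▸ ENat.natCast_lt_top n))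
  obtain ⟨m, hm⟩ := ENat.ne_top_iff_exists.mp (hlt.trans (ENat.natCast_lt_top n)).ne
  exact ⟨m, by exact_mod_cast hm ▸ hlt, hm.symm⟩

lemma acc_gt_of_coheight_eq (n : ℕ) {a : α} (ha : coheight a = n) : Acc (· > ·) a := by
  induction n using Nat.strong_induction_on generalizing a with
  | _ n ih =>
    refine ⟨a, fun b hab => ?_⟩
    obtain ⟨m, hmn, hm⟩ := exists_coheight_eq_lt_of_lt ha hab
    exact ih m hmn hm

lemma rank_gt_eq_of_coheight_eq (n : ℕ) {a : α} (h : Acc (· > ·) a) (ha : coheight a = n) :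
    h.rank = n := by
  induction n using Nat.strong_induction_on generalizing a with
  | _ n ih =>
    apply le_antisymm
    · rw [Acc.rank_eq]
      refine Ordinal.iSup_le fun ⟨b, hab⟩ => ?_
      obtain ⟨m, hmn, hm⟩ := exists_coheight_eq_lt_of_lt ha hab
      rw [ih m hmn _ hm, Order.succ_le_iff]
      exact_mod_cast hmn
    · rcases n with _ | m
      · simp
      · obtain ⟨b, hab, hb⟩ := (coheight_eq_coe_add_one_iff.mp (by exact_mod_cast ha)).2.1
        have hrank := h.rank_lt_of_rel hab
        rwa [ih m m.lt_succ_self _ hb, ← Order.succ_le_iff, Order.succ_eq_add_one,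
          ← Nat.cast_succ] at hrank

end Order

section Ring

variable {R : Type*} [Ring R] {K M N : Type*} [AddCommGroup K] [Module R K]
  [AddCommGroup M] [Module R M] [AddCommGroup N] [Module R N]

lemma Submodule.map_span_singleton (g : M →ₗ[R] N) (x : M) : (R ∙ x).map g = R ∙ g x := by
  rw [map_span, Set.image_singleton]

lemma Function.Exact.codRestrict_restrict {f : K →ₗ[R] M} {g : M →ₗ[R] N}
    (hfg : Function.Exact f g) {M' : Submodule R M} {N' : Submodule R N}
    (hf : ∀ x, f x ∈ M') (hg : ∀ x ∈ M', g x ∈ N') :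
    Function.Exact (f.codRestrict M' hf) (g.restrict hg) := by
  intro y
  simp only [Subtype.ext_iff, LinearMap.coe_restrict_apply, ZeroMemClass.coe_zero, hfg y.1,
    Set.mem_range, LinearMap.codRestrict_apply]

lemma IsFiniteLength.of_exact (f : K →ₗ[R] M) (g : M →ₗ[R] N) (hf : Function.Injective f)
    (hg : Function.Surjective g) (hfg : Function.Exact f g) (hK : IsFiniteLength R K)
    (hN : IsFiniteLength R N) : IsFiniteLength R M := by
  rw [← Module.length_ne_top_iff] at hK hN ⊢
  rw [Module.length_eq_add_of_exact f g hf hg hfg]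
  exact WithTop.add_ne_top.mpr ⟨hK, hN⟩

lemma IsFiniteLength.of_le {S T : Submodule R M} (hST : S ≤ T) (hT : IsFiniteLength R T) :
    IsFiniteLength R S :=
  hT.of_injective (Submodule.inclusion_injective hST)

lemma IsFiniteLength.submodule_map (g : M →ₗ[R] N) {S : Submodule R M}
    (hS : IsFiniteLength R S) : IsFiniteLength R (S.map g) :=
  hS.of_surjective (g.submoduleMap_surjective S)

lemma IsFiniteLength.of_ker_of_submodule_map (g : M →ₗ[R] N) {S : Submodule R M}
    (hker : IsFiniteLength R (LinearMap.ker g)) (hS : IsFiniteLength R (S.map g)) :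
    IsFiniteLength R S := by
  let φ := g.submoduleMap S
  have hφ : ∀ z ∈ LinearMap.ker φ, S.subtype z ∈ LinearMap.ker g := fun z hz =>
    congrArg Subtype.val hz
  refine .of_exact _ φ (LinearMap.ker φ).injective_subtype (g.submoduleMap_surjective S)
    φ.exact_subtype_ker_map (hker.of_injective (f := S.subtype.restrict hφ) ?_) hS
  intro z w h
  have hzw : ((z : S) : M) = ((w : S) : M) := congrArg (fun v : LinearMap.ker g => (v : M)) h
  exact Subtype.ext (Subtype.ext hzw)

lemma Submodule.isFiniteLength_of_forall_isFiniteLength_span_singleton [IsNoetherian R M]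
    (L : Submodule R M) (hL : ∀ x ∈ L, IsFiniteLength R (R ∙ x)) : IsFiniteLength R L := by
  obtain ⟨s, rfl⟩ := IsNoetherian.noetherian L
  have : ∀ x : s, IsArtinian R (R ∙ (x : M)) := fun x =>
    (isFiniteLength_iff_isNoetherian_isArtinian.mp (hL x (subset_span x.2))).2
  have hart : IsArtinian R (span R (s : Set M)) := by
    rw [span_eq_iSup_of_singleton_spans, iSup_subtype']
    infer_instance
  exact isFiniteLength_iff_isNoetherian_isArtinian.mpr ⟨inferInstance, hart⟩

end Ring

section Length

variable {R : Type u} [CommRing R] {K M N : Type v} [AddCommGroup K] [Module R K]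
  [AddCommGroup M] [Module R M] [AddCommGroup N] [Module R N]

lemma olength_eq_of_length_eq {n : ℕ} (h : Module.length R M = n) : olength R M = n := by
  rw [Module.length_eq_coheight] at h
  rw [olength, dif_pos (Order.acc_gt_of_coheight_eq n h)]
  exact Order.rank_gt_eq_of_coheight_eq n _ h

lemma olength_eq_add_of_exact (f : K →ₗ[R] M) (g : M →ₗ[R] N) (hf : Function.Injective f)
    (hg : Function.Surjective g) (hfg : Function.Exact f g) (hM : IsFiniteLength R M) :
    olength R M = olength R N + olength R K := by
  obtain ⟨k, hk⟩ := ENat.ne_top_iff_exists.mp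
    (Module.length_ne_top_iff.mpr (hM.of_injective hf))
  obtain ⟨n, hn⟩ := ENat.ne_top_iff_exists.mp
    (Module.length_ne_top_iff.mpr (hM.of_surjective hg))
  have hlength := Module.length_eq_add_of_exact f g hf hg hfg
  rw [← hk, ← hn, ← Nat.cast_add] at hlength
  rw [olength_eq_of_length_eq hlength, olength_eq_of_length_eq hn.symm,
    olength_eq_of_length_eq hk.symm, Nat.add_comm, Nat.cast_add]

end Length

theorem lambda_exact_and_length_additive_general
    (A : Type u) [CommRing A] [IsNoetherianRing A]
    (K M N : Type u) [AddCommGroup K] [Module A K] [AddCommGroup M] [Module A M]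
    [AddCommGroup N] [Module A N]
    [Module.Finite A M]
    (f : K →ₗ[A] M) (g : M →ₗ[A] N)
    (hf : Function.Injective f) (hg : Function.Surjective g)
    (hfg : Function.Exact f g)
    (P : Ideal A) [P.IsPrime]
    (hK : IsFiniteLength (Localization.AtPrime P) (LocalizedModule P.primeCompl K))
    (ΛM : Submodule (Localization.AtPrime P) (LocalizedModule P.primeCompl M))
    (hΛM : ∀ x, x ∈ ΛM ↔ IsFiniteLength (Localization.AtPrime P)
        ↥(Submodule.span (Localization.AtPrime P) {x}))
    (ΛN : Submodule (Localization.AtPrime P) (LocalizedModule P.primeCompl N))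
    (hΛN : ∀ x, x ∈ ΛN ↔ IsFiniteLength (Localization.AtPrime P)
        ↥(Submodule.span (Localization.AtPrime P) {x})) :
    Function.Injective (LocalizedModule.map P.primeCompl f) ∧
    (∀ x, LocalizedModule.map P.primeCompl f x ∈ ΛM) ∧
    (∀ x ∈ ΛM, LocalizedModule.map P.primeCompl g x ∈ ΛN) ∧
    (∀ x ∈ ΛM, (LocalizedModule.map P.primeCompl g x = 0 ↔
      x ∈ Set.range (LocalizedModule.map P.primeCompl f))) ∧
    (∀ y ∈ ΛN, ∃ x ∈ ΛM, LocalizedModule.map P.primeCompl g x = y) ∧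
    olength (Localization.AtPrime P) ↥ΛM =
      olength (Localization.AtPrime P) ↥ΛN +
        olength (Localization.AtPrime P) (LocalizedModule P.primeCompl K) := by
  set S := P.primeCompl
  have : IsNoetherianRing (Localization.AtPrime P) := IsLocalization.isNoetherianRing S _ ‹_›
  have : Module.Finite (Localization.AtPrime P) (LocalizedModule S M) :=
    .of_isLocalizedModule S (LocalizedModule.mkLinearMap S M)
  have hf' := LocalizedModule.map_injective S f hf
  have hg' := LocalizedModule.map_surjective S g hg
  have hfg' : Function.Exact (LocalizedModule.map S f) (LocalizedModule.map S g) :=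
    IsLocalizedModule.map_exact S (LocalizedModule.mkLinearMap S K)
      (LocalizedModule.mkLinearMap S M) (LocalizedModule.mkLinearMap S N) f g hfg
  have hker :
      IsFiniteLength (Localization.AtPrime P) (LinearMap.ker (LocalizedModule.map S g)) := by
    rw [hfg'.linearMap_ker_eq]
    exact hK.of_surjective (LinearMap.surjective_rangeRestrict _)
  have hΛf : ∀ x, LocalizedModule.map S f x ∈ ΛM := fun x => (hΛM _).mpr <|
    .of_le ((Submodule.span_singleton_le_iff_mem _ _).mpr (hfg'.apply_apply_eq_zero x)) hker
  have hΛg : ∀ x ∈ ΛM, LocalizedModule.map S g x ∈ ΛN := fun x hx => (hΛN _).mpr <| by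
    rw [← Submodule.map_span_singleton]
    exact ((hΛM x).mp hx).submodule_map _
  have hΛlift : ∀ y ∈ ΛN, ∃ x ∈ ΛM, LocalizedModule.map S g x = y := by
    intro y hy
    obtain ⟨x, rfl⟩ := hg' y
    refine ⟨x, (hΛM x).mpr (.of_ker_of_submodule_map _ hker ?_), rfl⟩
    rw [Submodule.map_span_singleton]
    exact (hΛN _).mp hy
  refine ⟨hf', hΛf, hΛg, fun x _ => hfg' x, hΛlift, ?_⟩
  refine olength_eq_add_of_exact _ _ ((LinearMap.injective_codRestrict_iff hΛf).mpr hf')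
    (fun ⟨y, hy⟩ => ?_) (hfg'.codRestrict_restrict hΛf hΛg)
    (ΛM.isFiniteLength_of_forall_isFiniteLength_span_singleton fun x hx => (hΛM x).mp hx)
  obtain ⟨x, hx, hxy⟩ := hΛlift y hy
  exact ⟨⟨x, hx⟩, Subtype.ext hxy⟩

/-- Given a short exact sequence `0 → K → M → N → 0` of finitely generated modules over a
Noetherian ring such that `K ⊗ A_𝒫` has finite length, the induced sequence
`0 → K ⊗ A_𝒫 → Λ(M ⊗ A_𝒫) → Λ(N ⊗ A_𝒫) → 0` is exact, and
`ℓ(Λ(M ⊗ A_𝒫)) = ℓ(Λ(N ⊗ A_𝒫)) + ℓ(K ⊗ A_𝒫)`. -/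
theorem lambda_exact_and_length_additive
    (A : Type u) [CommRing A] [IsNoetherianRing A]
    (K M N : Type u) [AddCommGroup K] [Module A K] [AddCommGroup M] [Module A M]
    [AddCommGroup N] [Module A N]
    [Module.Finite A K] [Module.Finite A M] [Module.Finite A N]
    (f : K →ₗ[A] M) (g : M →ₗ[A] N)
    (hf : Function.Injective f) (hg : Function.Surjective g)
    (hfg : Function.Exact f g)
    (P : Ideal A) [P.IsPrime]
    (hK : IsFiniteLength (Localization.AtPrime P) (LocalizedModule P.primeCompl K))
    (ΛM : Submodule (Localization.AtPrime P) (LocalizedModule P.primeCompl M))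
    (hΛM : ∀ x, x ∈ ΛM ↔ IsFiniteLength (Localization.AtPrime P)
        ↥(Submodule.span (Localization.AtPrime P) {x}))
    (ΛN : Submodule (Localization.AtPrime P) (LocalizedModule P.primeCompl N))
    (hΛN : ∀ x, x ∈ ΛN ↔ IsFiniteLength (Localization.AtPrime P)
        ↥(Submodule.span (Localization.AtPrime P) {x})) :
    Function.Injective (LocalizedModule.map P.primeCompl f) ∧
    (∀ x, LocalizedModule.map P.primeCompl f x ∈ ΛM) ∧
    (∀ x ∈ ΛM, LocalizedModule.map P.primeCompl g x ∈ ΛN) ∧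
    (∀ x ∈ ΛM, (LocalizedModule.map P.primeCompl g x = 0 ↔
      x ∈ Set.range (LocalizedModule.map P.primeCompl f))) ∧
    (∀ y ∈ ΛN, ∃ x ∈ ΛM, LocalizedModule.map P.primeCompl g x = y) ∧
    olength (Localization.AtPrime P) ↥ΛM =
      olength (Localization.AtPrime P) ↥ΛN +
        olength (Localization.AtPrime P) (LocalizedModule P.primeCompl K) :=
  lambda_exact_and_length_additive_general A K M N f g hf hg hfg P hK ΛM hΛM ΛN hΛN
end

section
/- Every finitely generated simple module over a finitely generated commutative ring has finite cardinality. -/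
/-!
A simple module is `A ⧸ m` for a maximal ideal `m`, and `A ⧸ m` is a field finitely generated
as a ring. Since `ℤ` is a Jacobson ring, Zariski's lemma makes this field a finitely generated
abelian group. It cannot have characteristic zero, for then it would be integral over `ℤ` and
force `ℤ` to be a field; so it is a finite-dimensional vector space over some `𝔽_p`.
-/

theorem isJacobsonRing_of_jacobson_bot_eq_bot {R : Type*} [CommRing R] [IsDomain R]
    [IsPrincipalIdealRing R] (h : (⊥ : Ideal R).jacobson = ⊥) : IsJacobsonRing R := by
  refine isJacobsonRing_iff_prime_eq.mpr fun {P} hP => ?_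
  rcases eq_or_ne P ⊥ with rfl | hP_ne_bot
  · exact h
  · have := IsPrime.to_maximal_ideal hP_ne_bot
    exact Ideal.jacobson_eq_self_of_isMaximal

theorem Int.jacobson_bot : (⊥ : Ideal ℤ).jacobson = ⊥ := by
  refine le_antisymm (fun x hx => ?_) Ideal.le_jacobson
  rw [Ideal.mem_jacobson_bot] at hx
  have h₁ := Int.isUnit_iff.mp (hx 1)
  have h₂ := Int.isUnit_iff.mp (hx (-1))
  rw [Ideal.mem_bot]
  omega

instance Int.isJacobsonRing : IsJacobsonRing ℤ :=
  isJacobsonRing_of_jacobson_bot_eq_bot Int.jacobson_bot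

theorem finite_of_moduleFinite_int (K : Type*) [Field K] [Module.Finite ℤ K] : Finite K := by
  rcases CharP.char_is_prime_or_zero K (ringChar K) with hp | h0
  · have : Fact (ringChar K).Prime := ⟨hp⟩
    let := ZMod.algebra K (ringChar K)
    have : Module.Finite (ZMod (ringChar K)) K :=
      Module.Finite.of_restrictScalars_finite ℤ (ZMod (ringChar K)) K
    exact Module.finite_of_finite (ZMod (ringChar K))
  · have : CharZero K := (CharP.ringChar_zero_iff_CharZero K).mp h0
    exact (Int.not_isField (isField_of_isIntegral_of_isField (algebraMap ℤ K).injective_int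
      (Field.toIsField K))).elim

theorem finite_of_field_finiteType_int (K : Type*) [Field K] [alg : Algebra ℤ K]
    [Algebra.FiniteType ℤ K] : Finite K := by
  obtain rfl : alg = Ring.toIntAlgebra K := Subsingleton.elim _ _
  have : Module.Finite ℤ K := finite_of_finite_type_of_isJacobsonRing ℤ K
  exact finite_of_moduleFinite_int K

theorem finite_of_simpleModule_finiteType_general
    (A : Type*) [CommRing A] [Algebra.FiniteType ℤ A]
    (M : Type*) [AddCommGroup M] [Module A M] [IsSimpleModule A M] :
    Finite M := by
  obtain ⟨I, hI, ⟨e⟩⟩ := isSimpleModule_iff_quot_maximal.mp ‹IsSimpleModule A M›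
  let := Ideal.Quotient.field I
  have : Finite (A ⧸ I) := finite_of_field_finiteType_int (A ⧸ I)
  exact e.toEquiv.finite_iff.mpr this

/-- Every finitely generated simple module over a finitely generated commutative ring
has finite cardinality. -/
theorem finite_of_simpleModule_finiteType
    (A : Type*) [CommRing A] [Algebra.FiniteType ℤ A]
    (M : Type*) [AddCommGroup M] [Module A M] [IsSimpleModule A M]
    [Module.Finite A M] :
    Finite M :=
  finite_of_simpleModule_finiteType_general A M
end

section
/- Let A be a commutative ring and M a Noetherian A-module of Krull dimension ≤ α (every associated prime of M has coheight ≤ α), written as a composite extension of modules A/𝒬_i with 𝒬_i primes. Then for any prime 𝒫 of coheight α, the localized module M ⊗_A A_𝒫 has finite length over A_𝒫. -/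
/-!
The associated primes of `M_𝒫` over `A_𝒫` are the extensions of the associated primes `𝒬 ⊆ 𝒫`
of `M`. Since coheight is strictly antitone, `coht 𝒬 ≤ α = coht 𝒫` forces `𝒬 = 𝒫`, so the maximal
ideal is the only associated prime of `M_𝒫`. A finite module over a Noetherian ring whose
associated primes are all maximal has finite length: the minimal primes over its annihilator are
associated, so `R ⧸ Ann M` is a zero-dimensional Noetherian ring, hence Artinian.
-/

universe u

/-- The ordinal-valued coheight of a prime ideal of a Noetherian ring:
`coht 𝒫 = sup { coht 𝒬 + 1 : 𝒬 prime, 𝒬 ⊋ 𝒫 }`, defined by well-founded recursion. -/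
noncomputable def coht {A : Type u} [CommRing A] [IsNoetherianRing A]
    (p : PrimeSpectrum A) : Ordinal :=
  haveI : WellFoundedGT (PrimeSpectrum A) :=
    (show StrictMono (PrimeSpectrum.asIdeal (R := A)) from fun _ _ h => h).wellFoundedGT
  IsWellFounded.rank (α := PrimeSpectrum A) (· > ·) p

lemma coht_strictAnti {A : Type u} [CommRing A] [IsNoetherianRing A] :
    StrictAnti (coht (A := A)) := fun _ _ h =>
  haveI : WellFoundedGT (PrimeSpectrum A) :=
    (show StrictMono (PrimeSpectrum.asIdeal (R := A)) from fun _ _ h => h).wellFoundedGT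
  IsWellFounded.rank_lt_of_rel (r := ((· > ·) : PrimeSpectrum A → PrimeSpectrum A → Prop)) h

open IsLocalRing

section

variable {R : Type*} [CommRing R] [IsNoetherianRing R]
  {M : Type*} [AddCommGroup M] [Module R M]

lemma krullDimLE_zero_quotient_annihilator_of_forall_mem_associatedPrimes_isMaximal
    [Module.Finite R M] (h : ∀ q ∈ associatedPrimes R M, q.IsMaximal) :
    Ring.KrullDimLE 0 (R ⧸ Module.annihilator R M) := by
  refine Ring.krullDimLE_zero_iff.mpr fun J hJ => ?_
  have hP : (J.comap (Ideal.Quotient.mk _)).IsPrime := hJ.comap _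
  have hannP : Module.annihilator R M ≤ J.comap (Ideal.Quotient.mk _) := by
    simpa using Ideal.ker_le_comap (Ideal.Quotient.mk (Module.annihilator R M))
  obtain ⟨P₀, hP₀, hP₀le⟩ := Ideal.exists_minimalPrimes_le hannP
  have hP₀max : P₀.IsMaximal :=
    h P₀ (Module.associatedPrimes.minimalPrimes_annihilator_subset_associatedPrimes R M hP₀)
  exact Ideal.isMaximal_of_isIntegral_of_isMaximal_comap _
    (hP₀max.eq_of_le hP.ne_top hP₀le ▸ hP₀max)

theorem isFiniteLength_of_forall_mem_associatedPrimes_isMaximal [Module.Finite R M]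
    (h : ∀ q ∈ associatedPrimes R M, q.IsMaximal) : IsFiniteLength R M := by
  let := Module.quotientAnnihilator (R := R) (M := M)
  have := krullDimLE_zero_quotient_annihilator_of_forall_mem_associatedPrimes_isMaximal h
  have : IsArtinianRing (R ⧸ Module.annihilator R M) :=
    IsNoetherianRing.isArtinianRing_of_krullDimLE_zero
  have : IsScalarTower R (R ⧸ Module.annihilator R M) M :=
    (Module.isTorsionBySet_annihilator R M).isScalarTower
  have : Module.Finite (R ⧸ Module.annihilator R M) M :=
    .of_restrictScalars_finite R _ M
  have : IsArtinian R M :=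
    isArtinian_of_surjective_algebraMap (Ideal.Quotient.mk_surjective (I := Module.annihilator R M))
  exact isFiniteLength_iff_isNoetherian_isArtinian.mpr ⟨inferInstance, this⟩

lemma eq_maximalIdeal_of_mem_associatedPrimes_localizedModule {p : Ideal R} [p.IsPrime]
    (hp : ∀ q ∈ associatedPrimes R M, q ≤ p → q = p) {Q : Ideal (Localization.AtPrime p)}
    (hQ : Q ∈ associatedPrimes (Localization.AtPrime p) (LocalizedModule p.primeCompl M)) :
    Q = maximalIdeal (Localization.AtPrime p) := by
  have hQR : Q.comap (algebraMap R _) ∈ associatedPrimes R M := by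
    rw [← Module.associatedPrimes.preimage_comap_associatedPrimes_eq_associatedPrimes_of_isLocalizedModule
      p.primeCompl _ (LocalizedModule.mkLinearMap p.primeCompl M)] at hQ
    exact hQ
  have hle : Q.comap (algebraMap R _) ≤ p := by
    simpa only [Localization.AtPrime.under_maximalIdeal] using
      Ideal.comap_mono (f := algebraMap R _) (le_maximalIdeal hQ.isPrime.ne_top)
  exact Localization.AtPrime.eq_maximalIdeal_iff_under_eq.mp (hp _ hQR hle)

end

/-- If `M` is a Noetherian module of Krull dimension `≤ α` (every associated prime has
coheight `≤ α`) and `𝒫` is a prime of coheight `α`, then the localization `M ⊗ A_𝒫`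
has finite length over `A_𝒫`. -/
theorem isFiniteLength_localizedModule_of_krullDim_le
    (A : Type u) [CommRing A] [IsNoetherianRing A]
    (M : Type u) [AddCommGroup M] [Module A M] [Module.Finite A M]
    (α : Ordinal) (hM : ∀ q : PrimeSpectrum A, q.asIdeal ∈ associatedPrimes A M → coht q ≤ α)
    (p : PrimeSpectrum A) (hp : coht p = α) :
    IsFiniteLength (Localization.AtPrime p.asIdeal)
      (LocalizedModule p.asIdeal.primeCompl M) := by
  have hmin : ∀ q ∈ associatedPrimes A M, q ≤ p.asIdeal → q = p.asIdeal := by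
    intro q hq hle
    by_contra hne
    have hlt : (⟨q, hq.isPrime⟩ : PrimeSpectrum A) < p :=
      lt_of_le_of_ne hle (hne ∘ congrArg PrimeSpectrum.asIdeal)
    exact (coht_strictAnti hlt).not_ge (hp ▸ hM _ hq)
  have : IsNoetherianRing (Localization.AtPrime p.asIdeal) :=
    IsLocalization.isNoetherianRing p.asIdeal.primeCompl _ inferInstance
  have : Module.Finite (Localization.AtPrime p.asIdeal) (LocalizedModule p.asIdeal.primeCompl M) :=
    .of_isLocalizedModule p.asIdeal.primeCompl (LocalizedModule.mkLinearMap _ M)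
  exact isFiniteLength_of_forall_mem_associatedPrimes_isMaximal fun Q hQ =>
    eq_maximalIdeal_of_mem_associatedPrimes_localizedModule hmin hQ ▸ maximalIdeal.isMaximal _
end

section
/- Let A be a commutative ring and M an A-module, and let N be a quotient of M with kernel W. The natural embedding of Sub_A(M/W) into Sub_A(M) (sending a submodule of M/W to its preimage in M) is a topological embedding with closed image, and the image is open if W is finitely generated. -/
/-- The characteristic function of a submodule, valued in the discrete space `Bool`. -/
noncomputable def submoduleChar {A : Type*} [CommRing A] {X : Type*} [AddCommGroup X]
    [Module A X] (N : Submodule A X) : X → Bool :=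
  fun m => @decide (m ∈ N) (Classical.propDecidable _)

/-- The topology on the set of submodules of `X`, induced from the product topology on
`2^X` via characteristic functions. -/
noncomputable def subTop (A : Type*) [CommRing A] (X : Type*) [AddCommGroup X]
    [Module A X] : TopologicalSpace (Submodule A X) :=
  TopologicalSpace.induced submoduleChar inferInstance

/-
The topology on `Sub_A(X)` is generated by the clopen sets `{N | x ∈ N}`. Since `M → M/W` is
surjective, precomposing characteristic functions with it embeds `2^(M/W)` into `2^M`, which gives
the embedding. Its image `{N | W ≤ N} = ⋂_{w ∈ W} {N | w ∈ N}` is closed, and when `W` is spanned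
by a finite set `s` the intersection may be taken over `s` only, so it is also open.
-/

open Topology TopologicalSpace

theorem Pi.isInducing_precomp_of_surjective {ι ι' Y : Type*} [TopologicalSpace Y] {φ : ι' → ι}
    (hφ : Function.Surjective φ) : IsInducing (fun g : ι → Y => g ∘ φ) :=
  ⟨by
    rw [Pi.induced_precomp, hφ.iInf_comp (g := fun i => induced (Function.eval i) _)]
    rfl⟩

theorem Submodule.range_comap_mkQ {A M : Type*} [Ring A] [AddCommGroup M] [Module A M]
    (W : Submodule A M) : Set.range (Submodule.comap W.mkQ) = Set.Ici W := by
  ext N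
  refine ⟨?_, fun hWN => ⟨N.map W.mkQ, ?_⟩⟩
  · rintro ⟨V, rfl⟩
    exact W.le_comap_mkQ V
  · rw [Submodule.comap_map_mkQ, sup_eq_right.mpr hWN]

section SubmoduleTopology

variable {A : Type*} [CommRing A] {X Y : Type*} [AddCommGroup X] [Module A X]
  [AddCommGroup Y] [Module A Y]

attribute [local instance] subTop

@[simp]
theorem submoduleChar_eq_true_iff (N : Submodule A X) (x : X) :
    submoduleChar N x = true ↔ x ∈ N := by
  simp [submoduleChar]

theorem submoduleChar_comap (f : X →ₗ[A] Y) (N : Submodule A Y) :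
    submoduleChar (N.comap f) = submoduleChar N ∘ f :=
  rfl

theorem isInducing_submoduleChar : IsInducing (submoduleChar : Submodule A X → X → Bool) :=
  ⟨rfl⟩

theorem isClopen_setOf_mem (x : X) : IsClopen {N : Submodule A X | x ∈ N} := by
  have hx : Continuous fun N : Submodule A X => submoduleChar N x :=
    (continuous_apply x).comp isInducing_submoduleChar.continuous
  simpa only [Set.preimage, Set.mem_singleton_iff, submoduleChar_eq_true_iff] using
    (isClopen_discrete {true}).preimage hx

theorem setOf_subset_eq_biInter (s : Set X) :
    {N : Submodule A X | s ⊆ N} = ⋂ x ∈ s, {N : Submodule A X | x ∈ N} := by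
  ext N
  simp [Set.subset_def]

theorem isClosed_setOf_subset (s : Set X) : IsClosed {N : Submodule A X | s ⊆ N} := by
  rw [setOf_subset_eq_biInter]
  exact isClosed_biInter fun x _ => (isClopen_setOf_mem x).isClosed

theorem isOpen_setOf_subset {s : Set X} (hs : s.Finite) : IsOpen {N : Submodule A X | s ⊆ N} := by
  rw [setOf_subset_eq_biInter]
  exact hs.isOpen_biInter fun x _ => (isClopen_setOf_mem x).isOpen

theorem Submodule.isClosed_Ici (W : Submodule A X) : IsClosed (Set.Ici W) :=
  isClosed_setOf_subset (W : Set X)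

theorem Submodule.FG.isOpen_Ici {W : Submodule A X} (hW : W.FG) : IsOpen (Set.Ici W) := by
  obtain ⟨s, rfl⟩ := hW
  simpa only [Set.Ici, Submodule.span_le] using isOpen_setOf_subset s.finite_toSet

theorem isEmbedding_comap_of_surjective {f : X →ₗ[A] Y} (hf : Function.Surjective f) :
    IsEmbedding (Submodule.comap f) := by
  have hchar : submoduleChar ∘ Submodule.comap f = (· ∘ f) ∘ submoduleChar (X := Y) :=
    funext (submoduleChar_comap f)
  have hinducing : IsInducing (submoduleChar ∘ Submodule.comap f) := by
    rw [hchar]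
    exact (Pi.isInducing_precomp_of_surjective hf).comp isInducing_submoduleChar
  exact ⟨isInducing_submoduleChar.of_comp_iff.mp hinducing,
    Submodule.comap_injective_of_surjective hf⟩

end SubmoduleTopology

/-- For a quotient `M/W` of a module `M`, the natural map `Sub_A(M/W) → Sub_A(M)`
(taking preimages under the quotient map) is a topological embedding with closed image,
and its image is open if `W` is finitely generated. -/
theorem subTop_embedding_closed_image
    (A : Type*) [CommRing A] (M : Type*) [AddCommGroup M] [Module A M]
    (W : Submodule A M) :
    letI : TopologicalSpace (Submodule A M) := subTop A M
    letI : TopologicalSpace (Submodule A (M ⧸ W)) := subTop A (M ⧸ W)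
    Topology.IsEmbedding (fun V : Submodule A (M ⧸ W) => V.comap W.mkQ) ∧
    IsClosed (Set.range (fun V : Submodule A (M ⧸ W) => V.comap W.mkQ)) ∧
    (W.FG → IsOpen (Set.range (fun V : Submodule A (M ⧸ W) => V.comap W.mkQ))) := by
  refine ⟨isEmbedding_comap_of_surjective W.mkQ_surjective, ?_, fun hW => ?_⟩
  · exact W.range_comap_mkQ ▸ W.isClosed_Ici
  · exact W.range_comap_mkQ ▸ hW.isOpen_Ici
end
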